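/- arXiv:1708.02066 — 4 statements merged into one kernel-verified Lean document; each statement's English description precedes it below -/
import Mathlib

section
/- Let 1<p≤q<∞ with conjugate exponents p',q', and let ω, σ be weights. Suppose there is a constant C such that ∫_Ω Σ_{i∈ℤ} α_i 𝔼_i(fσ) 𝔼_i(gω) dμ ≤ C ‖f‖_{L^p(σ)} ‖g‖_{L^{q'}(ω)} for all nonnegative f ∈ L^p(σ) and g ∈ L^{q'}(ω). Then both testing conditions hold with constant C: for every i∈ℤ and E∈𝓕_i⁰, (∫_E (Σ_{j≥i} 𝔼_j(σ) α_j)^q ω dμ)^{1/q} ≤ C σ(E)^{1/p} and (∫_E (Σ_{j≥i} 𝔼_j(ω) α_j)^{p'} σ dμ)^{1/p'} ≤ C ω(E)^{1/q'}. -/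
/-!
For `j ≥ i` the set `E ∈ 𝓕ᵢ` is `𝓕ⱼ`-measurable, so `𝔼ⱼ(𝟙_E σ) = 𝟙_E 𝔼ⱼ(σ)`, and in
`∫ 𝟙_E αⱼ 𝔼ⱼ(σ) 𝔼ⱼ(gω) dμ` the factor `𝔼ⱼ(gω)` may be replaced by `gω`, the other factor being
`𝓕ⱼ`-measurable. Testing the bilinear bound with `f = 𝟙_E` therefore bounds
`∫_E (Σ_{j ≥ i} αⱼ 𝔼ⱼ(σ)) g ω dμ` by `C σ(E)^{1/p} ‖g‖_{L^{q'}(ω)}`, and `L^q(ω)`–`L^{q'}(ω)`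
duality, run on truncations so that the quantity to be cancelled is finite, gives the first
testing condition. The second is the same argument with `(σ, p)` and `(ω, q')` exchanged.
-/

open MeasureTheory Set
open scoped ENNReal NNReal

section

variable {Ω : Type*}

theorem lintegral_mul_condLExp {m m₀ : MeasurableSpace Ω} {P : Measure[m₀] Ω} (hm : m ≤ m₀)
    [SigmaFinite (P.trim hm)] {h X : Ω → ℝ≥0∞} (hh : Measurable[m] h) (hX : AEMeasurable X P) :
    ∫⁻ x, h x * P⁻[X|m] x ∂P = ∫⁻ x, h x * X x ∂P := by
  have hY : AEMeasurable P⁻[X|m] P := (measurable_condLExp' m P X).aemeasurable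
  refine Measurable.ennreal_induction
    (motive := fun h => ∫⁻ x, h x * P⁻[X|m] x ∂P = ∫⁻ x, h x * X x ∂P) ?_ ?_ ?_ hh
  · intro c s hs
    simp only [← indicator_mul_left, lintegral_indicator (hm s hs),
      lintegral_const_mul'' _ hY.restrict, lintegral_const_mul'' _ hX.restrict,
      setLIntegral_condLExp hm P X hs]
  · intro f g _ hf hg ihf ihg
    have hf₀ : Measurable[m₀] f := hf.mono hm le_rfl
    simp only [Pi.add_apply, add_mul]
    rw [lintegral_add_left' (by fun_prop), lintegral_add_left' (by fun_prop), ihf, ihg]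
  · intro f hf hmono ih
    have hf₀ : ∀ n, Measurable[m₀] (f n) := fun n => (hf n).mono hm le_rfl
    simp only [ENNReal.iSup_mul]
    rw [lintegral_iSup' (f := fun n x => f n x * P⁻[X|m] x) (fun n => by fun_prop)
        (ae_of_all _ fun x _ _ hij => mul_le_mul_left (hmono hij x) _),
      lintegral_iSup' (f := fun n x => f n x * X x) (fun n => by fun_prop)
        (ae_of_all _ fun x _ _ hij => mul_le_mul_left (hmono hij x) _)]
    exact iSup_congr ih

theorem lintegral_mul_ofReal_condExp {m m₀ : MeasurableSpace Ω} {μ : Measure[m₀] Ω} (hm : m ≤ m₀)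
    [SigmaFinite (μ.trim hm)] {h : Ω → ℝ≥0∞} (hh : Measurable[m] h) {f : Ω → ℝ}
    (hf : Integrable f μ) (hf₀ : 0 ≤ᵐ[μ] f) :
    ∫⁻ x, h x * ENNReal.ofReal (μ[f|m] x) ∂μ = ∫⁻ x, h x * ENNReal.ofReal (f x) ∂μ := by
  rw [← lintegral_mul_condLExp hm hh hf.1.aemeasurable.ennreal_ofReal]
  refine lintegral_congr_ae ?_
  filter_upwards [condLExp_ofReal m hf hf₀] with x hx
  rw [hx]

theorem ENNReal.rpow_one_div_le_of_le_mul_rpow {A D : ℝ≥0∞} {p q : ℝ} (hpq : p.HolderConjugate q)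
    (hA : A ≠ ∞) (h : A ≤ D * A ^ (1 / q)) : A ^ (1 / p) ≤ D := by
  rcases eq_or_ne A 0 with rfl | hA₀
  · rw [ENNReal.zero_rpow_of_pos hpq.one_div_pos]
    exact zero_le
  have hsplit : A ^ (1 / p) * A ^ (1 / q) = A := by
    rw [← ENNReal.rpow_add _ _ hA₀ hA, one_div, one_div, hpq.inv_add_inv_eq_one, ENNReal.rpow_one]
  refine (ENNReal.mul_le_mul_iff_left (ENNReal.rpow_pos (pos_iff_ne_zero.2 hA₀) hA).ne'
    (ENNReal.rpow_ne_top_of_nonneg hpq.symm.one_div_nonneg hA)).1 ?_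
  rwa [hsplit]

theorem ENNReal.iSup_rpow {ι : Sort*} (f : ι → ℝ≥0∞) {p : ℝ} (hp : 0 < p) :
    (⨆ i, f i) ^ p = ⨆ i, f i ^ p :=
  (ENNReal.monotone_rpow_of_nonneg hp.le).map_iSup_of_continuousAt
    ENNReal.continuous_rpow_const.continuousAt (ENNReal.zero_rpow_of_pos hp)

theorem lintegral_rpow_le_of_forall_lintegral_mul_le_of_le {m : MeasurableSpace Ω}
    {ν : Measure Ω} [IsFiniteMeasure ν] {F G : Ω → ℝ≥0∞} (hG : Measurable G) {c : ℝ≥0}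
    (hGc : ∀ x, G x ≤ c) (hGF : G ≤ F) {p q : ℝ} (hpq : p.HolderConjugate q) {D : ℝ≥0∞}
    (h : ∀ u : Ω → ℝ≥0, Measurable u → BddAbove (range u) →
      ∫⁻ x, F x * u x ∂ν ≤ D * (∫⁻ x, (u x : ℝ≥0∞) ^ q ∂ν) ^ (1 / q)) :
    (∫⁻ x, G x ^ p ∂ν) ^ (1 / p) ≤ D := by
  -- the extremal test function `u = G ^ (p - 1)`, for which `u ^ q = G ^ p`
  set u : Ω → ℝ≥0 := fun x => (G x).toNNReal ^ (p - 1)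
  have hG_top : ∀ x, G x ≠ ∞ := fun x => ne_top_of_le_ne_top ENNReal.coe_ne_top (hGc x)
  have hu : ∀ x, (u x : ℝ≥0∞) = G x ^ (p - 1) := fun x => by
    rw [ENNReal.coe_rpow_of_nonneg _ hpq.sub_one_pos.le, ENNReal.coe_toNNReal (hG_top x)]
  have hGu : ∀ x, G x ^ p ≤ F x * u x := fun x => by
    calc G x ^ p = G x * G x ^ (p - 1) := by
          conv_lhs => rw [show p = 1 + (p - 1) by ring]
          rw [ENNReal.rpow_add_of_nonneg _ _ zero_le_one hpq.sub_one_pos.le, ENNReal.rpow_one]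
      _ ≤ F x * u x := by rw [hu]; gcongr; exact hGF x
  have hub : BddAbove (range u) := ⟨c ^ (p - 1), by
    rintro _ ⟨x, rfl⟩
    refine NNReal.rpow_le_rpow ?_ hpq.sub_one_pos.le
    simpa using ENNReal.toNNReal_mono ENNReal.coe_ne_top (hGc x)⟩
  have hfin : ∫⁻ x, G x ^ p ∂ν ≠ ∞ := by
    refine ((lintegral_mono fun x => ENNReal.rpow_le_rpow (hGc x) hpq.nonneg).trans_lt ?_).ne
    rw [lintegral_const]
    exact ENNReal.mul_lt_top (ENNReal.rpow_lt_top_of_nonneg hpq.nonneg ENNReal.coe_ne_top)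
      (measure_lt_top ν univ)
  refine ENNReal.rpow_one_div_le_of_le_mul_rpow hpq hfin ?_
  calc ∫⁻ x, G x ^ p ∂ν ≤ ∫⁻ x, F x * u x ∂ν := lintegral_mono hGu
    _ ≤ D * (∫⁻ x, (u x : ℝ≥0∞) ^ q ∂ν) ^ (1 / q) :=
        h u (measurable_coe_nnreal_ennreal_iff.1 (by simp only [hu]; fun_prop)) hub
    _ = D * (∫⁻ x, G x ^ p ∂ν) ^ (1 / q) := by
        simp only [hu, ← ENNReal.rpow_mul, hpq.sub_one_mul_conj]

theorem lintegral_rpow_le_of_forall_lintegral_mul_le {m : MeasurableSpace Ω} {ν : Measure Ω}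
    [IsFiniteMeasure ν] {F : Ω → ℝ≥0∞} (hF : Measurable F) {p q : ℝ} (hpq : p.HolderConjugate q)
    {D : ℝ≥0∞} (h : ∀ u : Ω → ℝ≥0, Measurable u → BddAbove (range u) →
      ∫⁻ x, F x * u x ∂ν ≤ D * (∫⁻ x, (u x : ℝ≥0∞) ^ q ∂ν) ^ (1 / q)) :
    (∫⁻ x, F x ^ p ∂ν) ^ (1 / p) ≤ D := by
  have hsup : ∀ x, F x ^ p = ⨆ n : ℕ, (F x ⊓ n) ^ p := fun x => by
    rw [← ENNReal.iSup_rpow _ hpq.pos, ← inf_iSup_eq, ENNReal.iSup_natCast, inf_top_eq]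
  simp only [hsup]
  rw [lintegral_iSup (fun n => (hF.min measurable_const).pow_const p)
      (fun i j hij x =>
        ENNReal.rpow_le_rpow (inf_le_inf_left _ (by exact_mod_cast hij)) hpq.nonneg),
    ENNReal.iSup_rpow _ hpq.one_div_pos]
  exact iSup_le fun n => lintegral_rpow_le_of_forall_lintegral_mul_le_of_le
    (hF.min measurable_const) (c := n) (fun x => inf_le_right) (fun x => inf_le_left) hpq h

theorem setLIntegral_ofReal_condExp_mul {m m₀ : MeasurableSpace Ω} {μ : Measure[m₀] Ω}
    (hm : m ≤ m₀) [SigmaFinite (μ.trim hm)] {E : Set Ω} (hE : MeasurableSet[m] E) {a τ ψ : Ω → ℝ}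
    (ha : StronglyMeasurable[m] a) (hτ : Integrable τ μ) (hψ : Integrable ψ μ)
    (hψ₀ : 0 ≤ᵐ[μ] ψ) :
    ∫⁻ x in E, ENNReal.ofReal (μ[τ|m] x * a x) * ENNReal.ofReal (ψ x) ∂μ
      = ∫⁻ x, ENNReal.ofReal (a x * μ[E.indicator τ|m] x * μ[ψ|m] x) ∂μ := by
  have hh : Measurable[m] (E.indicator fun x => ENNReal.ofReal (μ[τ|m] x * a x)) :=
    (stronglyMeasurable_condExp.measurable.mul ha.measurable).ennreal_ofReal.indicator hE
  rw [← lintegral_indicator (hm E hE)]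
  simp_rw [indicator_mul_left]
  rw [← lintegral_mul_ofReal_condExp hm hh hψ hψ₀]
  refine lintegral_congr_ae ?_
  filter_upwards [condExp_indicator hτ hE, condExp_nonneg (m := m) hψ₀] with x hx hx₀
  rw [hx]
  by_cases hxE : x ∈ E <;> simp [hxE, ENNReal.ofReal_mul' hx₀, mul_comm]

theorem integrable_nnreal_rpow_mul {m : MeasurableSpace Ω} {μ : Measure Ω} {w : Ω → ℝ}
    (hw : Integrable w μ) {u : Ω → ℝ≥0} (hu : Measurable u) (hub : BddAbove (range u)) {r : ℝ}
    (hr : 0 ≤ r) : Integrable (fun x => (u x : ℝ) ^ r * w x) μ := by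
  obtain ⟨M, hM⟩ := hub
  refine hw.bdd_mul (c := (M : ℝ) ^ r) (hu.coe_nnreal_real.pow_const r).aestronglyMeasurable
    (ae_of_all _ fun x => ?_)
  rw [Real.norm_of_nonneg (by positivity)]
  exact Real.rpow_le_rpow (NNReal.coe_nonneg _) (hM ⟨x, rfl⟩) hr

theorem ofReal_integral_nnreal_rpow_mul {m : MeasurableSpace Ω} {μ : Measure Ω} {w : Ω → ℝ}
    (hw : Integrable w μ) (hw₀ : 0 ≤ w) {u : Ω → ℝ≥0} (hu : Measurable u)
    (hub : BddAbove (range u)) {r : ℝ} (hr : 0 ≤ r) :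
    ENNReal.ofReal (∫ x, (u x : ℝ) ^ r * w x ∂μ)
      = ∫⁻ x, (u x : ℝ≥0∞) ^ r ∂μ.withDensity fun x => ENNReal.ofReal (w x) := by
  rw [ofReal_integral_eq_lintegral_ofReal (integrable_nnreal_rpow_mul hw hu hub hr)
      (ae_of_all _ fun x => mul_nonneg (by positivity) (hw₀ x)),
    lintegral_withDensity_eq_lintegral_mul₀ hw.1.aemeasurable.ennreal_ofReal (by fun_prop)]
  refine lintegral_congr fun x => ?_
  rw [Pi.mul_apply, ENNReal.ofReal_mul' (hw₀ x),
    ← ENNReal.ofReal_rpow_of_nonneg (NNReal.coe_nonneg _) hr, ENNReal.ofReal_coe_nnreal, mul_comm]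

theorem coe_indicator_one_mul (E : Set Ω) (w : Ω → ℝ) :
    (fun x => ((E.indicator (1 : Ω → ℝ≥0) x : ℝ≥0) : ℝ) * w x) = E.indicator w :=
  funext fun x => by by_cases hx : x ∈ E <;> simp [hx]

theorem lintegral_coe_indicator_one_rpow {m : MeasurableSpace Ω} (ν : Measure Ω) {E : Set Ω}
    (hE : MeasurableSet E) {r : ℝ} (hr : 0 < r) :
    ∫⁻ x, ((E.indicator (1 : Ω → ℝ≥0) x : ℝ≥0) : ℝ≥0∞) ^ r ∂ν = ν E := by
  have h : ∀ x, ((E.indicator (1 : Ω → ℝ≥0) x : ℝ≥0) : ℝ≥0∞) ^ r = E.indicator 1 x := fun x => by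
    by_cases hx : x ∈ E <;> simp [hx, ENNReal.zero_rpow_of_pos hr]
  simp only [h, lintegral_indicator_one hE]

section Filtration

variable {m : MeasurableSpace Ω} {ι : Type*} [Preorder ι]

noncomputable def bilinForm (μ : Measure Ω) (ℱ : Filtration ι m) (α : ι → Ω → ℝ)
    (φ ψ : Ω → ℝ) : ℝ≥0∞ :=
  ∫⁻ x, ∑' i, ENNReal.ofReal (α i x * (μ[φ|ℱ i]) x * (μ[ψ|ℱ i]) x) ∂μ

noncomputable def tailSum (μ : Measure Ω) (ℱ : Filtration ι m) (α : ι → Ω → ℝ) (τ : Ω → ℝ)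
    (i : ι) (x : Ω) : ℝ≥0∞ :=
  ∑' j : {j : ι // i ≤ j}, ENNReal.ofReal ((μ[τ|ℱ j.1]) x * α j.1 x)

variable {μ : Measure Ω} {ℱ : Filtration ι m} {α : ι → Ω → ℝ}

theorem bilinForm_le_of_bound {σ ω : Ω → ℝ} (hσ : Integrable σ μ) (hσ₀ : 0 ≤ σ)
    (hω : Integrable ω μ) (hω₀ : 0 ≤ ω) {C a b s t : ℝ} (ha : 0 ≤ a) (hb : 0 ≤ b) (hs : 0 ≤ s)
    (ht : 0 ≤ t)
    (hbound : ∀ f g : Ω → ℝ, Measurable f → Measurable g → 0 ≤ f → 0 ≤ g →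
      Integrable (fun x => f x * σ x) μ → Integrable (fun x => g x * ω x) μ →
      Integrable (fun x => f x ^ a * σ x) μ → Integrable (fun x => g x ^ b * ω x) μ →
      bilinForm μ ℱ α (fun x => f x * σ x) (fun x => g x * ω x)
        ≤ ENNReal.ofReal (C * (∫ x, f x ^ a * σ x ∂μ) ^ s * (∫ x, g x ^ b * ω x ∂μ) ^ t))
    (f g : Ω → ℝ≥0) (hf : Measurable f) (hg : Measurable g) (hfb : BddAbove (range f))
    (hgb : BddAbove (range g)) :
    bilinForm μ ℱ α (fun x => f x * σ x) (fun x => g x * ω x)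
      ≤ ENNReal.ofReal C * (∫⁻ x, (f x : ℝ≥0∞) ^ a ∂μ.withDensity fun x => ENNReal.ofReal (σ x)) ^ s
        * (∫⁻ x, (g x : ℝ≥0∞) ^ b ∂μ.withDensity fun x => ENNReal.ofReal (ω x)) ^ t := by
  have hfσ : 0 ≤ ∫ x, (f x : ℝ) ^ a * σ x ∂μ :=
    integral_nonneg fun x => mul_nonneg (by positivity) (hσ₀ x)
  have hgω : 0 ≤ ∫ x, (g x : ℝ) ^ b * ω x ∂μ :=
    integral_nonneg fun x => mul_nonneg (by positivity) (hω₀ x)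
  refine (hbound _ _ hf.coe_nnreal_real hg.coe_nnreal_real (fun x => (f x).2) (fun x => (g x).2)
    (by simpa using integrable_nnreal_rpow_mul hσ hf hfb zero_le_one)
    (by simpa using integrable_nnreal_rpow_mul hω hg hgb zero_le_one)
    (integrable_nnreal_rpow_mul hσ hf hfb ha) (integrable_nnreal_rpow_mul hω hg hgb hb)).trans_eq ?_
  rw [ENNReal.ofReal_mul' (by positivity), ENNReal.ofReal_mul' (by positivity),
    ← ENNReal.ofReal_rpow_of_nonneg hfσ hs, ← ENNReal.ofReal_rpow_of_nonneg hgω ht,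
    ofReal_integral_nnreal_rpow_mul hσ hσ₀ hf hfb ha,
    ofReal_integral_nnreal_rpow_mul hω hω₀ hg hgb hb]

theorem bilinForm_comm (φ ψ : Ω → ℝ) : bilinForm μ ℱ α φ ψ = bilinForm μ ℱ α ψ φ := by
  simp only [bilinForm, mul_right_comm]

variable [Countable ι] [SigmaFiniteFiltration μ ℱ]

theorem setLIntegral_tailSum_mul_le_bilinForm (hα : ∀ j, StronglyMeasurable[ℱ j] (α j)) {i : ι}
    {E : Set Ω} (hE : MeasurableSet[ℱ i] E) {τ ψ : Ω → ℝ} (hτ : Integrable τ μ)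
    (hψ : Integrable ψ μ) (hψ₀ : 0 ≤ᵐ[μ] ψ) :
    ∫⁻ x in E, tailSum μ ℱ α τ i x * ENNReal.ofReal (ψ x) ∂μ
      ≤ bilinForm μ ℱ α (E.indicator τ) ψ := by
  have hcond : ∀ j (f : Ω → ℝ), Measurable (μ[f|ℱ j]) := fun j f =>
    (stronglyMeasurable_condExp.mono (ℱ.le j)).measurable
  have hαm : ∀ j, Measurable (α j) := fun j => ((hα j).mono (ℱ.le j)).measurable
  have hψm : AEMeasurable ψ μ := hψ.1.aemeasurable
  calc ∫⁻ x in E, tailSum μ ℱ α τ i x * ENNReal.ofReal (ψ x) ∂μ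
      = ∑' j : {j : ι // i ≤ j},
          ∫⁻ x in E, ENNReal.ofReal (μ[τ|ℱ j.1] x * α j.1 x) * ENNReal.ofReal (ψ x) ∂μ := by
        simp_rw [tailSum, ← ENNReal.tsum_mul_right]
        exact lintegral_tsum fun j => by fun_prop
    _ = ∑' j : {j : ι // i ≤ j},
          ∫⁻ x, ENNReal.ofReal (α j.1 x * μ[E.indicator τ|ℱ j.1] x * μ[ψ|ℱ j.1] x) ∂μ :=
        tsum_congr fun j =>
          setLIntegral_ofReal_condExp_mul (ℱ.le j.1) (ℱ.mono j.2 E hE) (hα j.1) hτ hψ hψ₀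
    _ ≤ ∑' j, ∫⁻ x, ENNReal.ofReal (α j x * μ[E.indicator τ|ℱ j] x * μ[ψ|ℱ j] x) ∂μ :=
        ENNReal.tsum_comp_le_tsum_of_injective Subtype.val_injective
          (fun j => ∫⁻ x, ENNReal.ofReal (α j x * μ[E.indicator τ|ℱ j] x * μ[ψ|ℱ j] x) ∂μ)
    _ = bilinForm μ ℱ α (E.indicator τ) ψ :=
        (lintegral_tsum fun j => by fun_prop).symm

theorem setLIntegral_tailSum_rpow_le_of_bilinForm_le (hα : ∀ j, StronglyMeasurable[ℱ j] (α j))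
    {i : ι} {E : Set Ω} (hE : MeasurableSet[ℱ i] E) {τ ρ : Ω → ℝ} (hτ : Integrable τ μ)
    (hρ : Integrable ρ μ) (hρ₀ : 0 ≤ ρ) {b b' : ℝ} (hb : b.HolderConjugate b') {D : ℝ≥0∞}
    (hD : ∀ u : Ω → ℝ≥0, Measurable u → BddAbove (range u) →
      bilinForm μ ℱ α (E.indicator τ) (fun x => u x * ρ x)
        ≤ D * (∫⁻ x, (u x : ℝ≥0∞) ^ b' ∂μ.withDensity fun x => ENNReal.ofReal (ρ x)) ^ (1 / b')) :
    (∫⁻ x in E, tailSum μ ℱ α τ i x ^ b * ENNReal.ofReal (ρ x) ∂μ) ^ (1 / b) ≤ D := by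
  set ν := μ.withDensity fun x => ENNReal.ofReal (ρ x)
  have : IsFiniteMeasure ν := isFiniteMeasure_withDensity_ofReal hρ.2
  have hE₀ : MeasurableSet E := ℱ.le i E hE
  have hν : ∀ H : Ω → ℝ≥0∞,
      ∫⁻ x, E.indicator H x ∂ν = ∫⁻ x in E, H x * ENNReal.ofReal (ρ x) ∂μ := fun H => by
    rw [lintegral_indicator hE₀, setLIntegral_withDensity_eq_setLIntegral_mul_non_measurable₀ _
      hρ.1.aemeasurable.ennreal_ofReal.restrict _ hE₀ (ae_of_all _ fun _ => ENNReal.ofReal_lt_top)]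
    simp only [Pi.mul_apply, mul_comm]
  have hT : Measurable (tailSum μ ℱ α τ i) := Measurable.tsum fun j =>
    ((stronglyMeasurable_condExp.mono (ℱ.le j.1)).measurable.mul
      ((hα j.1).mono (ℱ.le j.1)).measurable).ennreal_ofReal
  have key := lintegral_rpow_le_of_forall_lintegral_mul_le (hT.indicator hE₀) hb
    (ν := ν) (D := D) fun u hu hub => by
      obtain ⟨M, hM⟩ := hub
      have hψ : Integrable (fun x => (u x : ℝ) * ρ x) μ :=
        hρ.bdd_mul (c := M) hu.coe_nnreal_real.aestronglyMeasurable
          (ae_of_all _ fun x => by simpa using hM ⟨x, rfl⟩)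
      calc ∫⁻ x, E.indicator (tailSum μ ℱ α τ i) x * u x ∂ν
          = ∫⁻ x, E.indicator (fun x => tailSum μ ℱ α τ i x * u x) x ∂ν := by
            simp only [indicator_mul_left]
        _ = ∫⁻ x in E, tailSum μ ℱ α τ i x * ENNReal.ofReal (u x * ρ x) ∂μ := by
            simp only [hν, mul_assoc, ENNReal.ofReal_mul (NNReal.coe_nonneg _),
              ENNReal.ofReal_coe_nnreal]
        _ ≤ bilinForm μ ℱ α (E.indicator τ) (fun x => u x * ρ x) :=
            setLIntegral_tailSum_mul_le_bilinForm hα hE hτ hψ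
              (ae_of_all _ fun x => mul_nonneg (NNReal.coe_nonneg _) (hρ₀ x))
        _ ≤ _ := hD u hu ⟨M, hM⟩
  have hpow : ∀ x, E.indicator (tailSum μ ℱ α τ i) x ^ b = E.indicator (tailSum μ ℱ α τ i ^ b) x :=
    fun x => by by_cases hx : x ∈ E <;> simp [hx, ENNReal.zero_rpow_of_pos hb.pos]
  simpa only [hpow, hν, Pi.pow_apply] using key

end Filtration

end

theorem testing_conditions_necessary_general
    {Ω : Type*} {m : MeasurableSpace Ω} {μ : Measure Ω}
    (ℱ : Filtration ℤ m) [SigmaFiniteFiltration μ ℱ]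
    (p q : ℝ) (hp : 1 < p) (hpq : p ≤ q)
    (α : ℤ → Ω → ℝ)
    (hα_meas : ∀ i, StronglyMeasurable[ℱ i] (α i))
    (ω σ : Ω → ℝ) (hω_nonneg : 0 ≤ ω) (hσ_nonneg : 0 ≤ σ)
    (hω_int : Integrable ω μ) (hσ_int : Integrable σ μ)
    (C : ℝ)
    (hbound : ∀ f g : Ω → ℝ, Measurable f → Measurable g → 0 ≤ f → 0 ≤ g →
      Integrable (fun x => f x * σ x) μ → Integrable (fun x => g x * ω x) μ →
      Integrable (fun x => f x ^ p * σ x) μ →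
      Integrable (fun x => g x ^ (q / (q - 1)) * ω x) μ →
      ∫⁻ x, ∑' i : ℤ, ENNReal.ofReal
          (α i x * (μ[fun y => f y * σ y|ℱ i]) x * (μ[fun y => g y * ω y|ℱ i]) x) ∂μ
        ≤ ENNReal.ofReal (C * (∫ x, f x ^ p * σ x ∂μ) ^ (1 / p)
            * (∫ x, g x ^ (q / (q - 1)) * ω x ∂μ) ^ (1 - 1 / q))) :
    ∀ i : ℤ, ∀ E : Set Ω, MeasurableSet[ℱ i] E → μ E < ∞ →
      ((∫⁻ x in E, (∑' j : {j : ℤ // i ≤ j},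
            ENNReal.ofReal ((μ[σ|ℱ j.1]) x * α j.1 x)) ^ q
          * ENNReal.ofReal (ω x) ∂μ) ^ (1 / q)
        ≤ ENNReal.ofReal C * (∫⁻ x in E, ENNReal.ofReal (σ x) ∂μ) ^ (1 / p))
      ∧ ((∫⁻ x in E, (∑' j : {j : ℤ // i ≤ j},
            ENNReal.ofReal ((μ[ω|ℱ j.1]) x * α j.1 x)) ^ (p / (p - 1))
          * ENNReal.ofReal (σ x) ∂μ) ^ (1 - 1 / p)
        ≤ ENNReal.ofReal C * (∫⁻ x in E, ENNReal.ofReal (ω x) ∂μ) ^ (1 - 1 / q)) := by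
  intro i E hE _
  have hpp : p.HolderConjugate (p / (p - 1)) := .conjExponent hp
  have hqq : q.HolderConjugate (q / (q - 1)) := .conjExponent (hp.trans_le hpq)
  have hp' : 1 - 1 / p = 1 / (p / (p - 1)) := by simpa only [one_div] using hpp.one_sub_inv
  have hq' : 1 - 1 / q = 1 / (q / (q - 1)) := by simpa only [one_div] using hqq.one_sub_inv
  have hB := bilinForm_le_of_bound (ℱ := ℱ) (α := α) hσ_int hσ_nonneg hω_int hω_nonneg hpp.nonneg
    hqq.symm.nonneg hpp.one_div_nonneg (hq' ▸ hqq.symm.one_div_nonneg) hbound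
  have hE₀ : MeasurableSet E := ℱ.le i E hE
  have hχ : Measurable (E.indicator (1 : Ω → ℝ≥0)) := measurable_const.indicator hE₀
  have hχb : BddAbove (range (E.indicator (1 : Ω → ℝ≥0))) :=
    ⟨1, by rintro _ ⟨x, rfl⟩; exact indicator_le_self' (fun _ _ => zero_le) x⟩
  constructor
  · refine setLIntegral_tailSum_rpow_le_of_bilinForm_le hα_meas hE hσ_int hω_int hω_nonneg hqq
      fun u hu hub => ?_
    simpa only [coe_indicator_one_mul, lintegral_coe_indicator_one_rpow _ hE₀ hpp.pos,
      withDensity_apply _ hE₀, ← hq'] using hB _ u hχ hu hχb hub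
  · rw [hp']
    refine setLIntegral_tailSum_rpow_le_of_bilinForm_le hα_meas hE hω_int hσ_int hσ_nonneg hpp.symm
      fun u hu hub => ?_
    rw [bilinForm_comm, mul_right_comm]
    simpa only [coe_indicator_one_mul, lintegral_coe_indicator_one_rpow _ hE₀ hqq.symm.pos,
      withDensity_apply _ hE₀] using hB u _ hu hχ hub hχb

/-- **Necessity of the testing conditions** (Theorem 1.1, easy direction).
If the bilinear positive operator satisfies the two-weight bound with constant `C`,
then both Sawyer-type testing conditions hold with the same constant `C`. -/
theorem testing_conditions_necessary
    {Ω : Type*} {m : MeasurableSpace Ω} {μ : Measure Ω} [SigmaFinite μ]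
    (ℱ : Filtration ℤ m) [SigmaFiniteFiltration μ ℱ]
    (p q : ℝ) (hp : 1 < p) (hpq : p ≤ q)
    (α : ℤ → Ω → ℝ) (hα_nonneg : ∀ i, 0 ≤ α i)
    (hα_meas : ∀ i, StronglyMeasurable[ℱ i] (α i))
    (hα_bdd : ∀ i, ∃ B : ℝ, ∀ x, α i x ≤ B)
    (ω σ : Ω → ℝ) (hω_nonneg : 0 ≤ ω) (hσ_nonneg : 0 ≤ σ)
    (hω_meas : Measurable ω) (hσ_meas : Measurable σ)
    (hω_int : Integrable ω μ) (hσ_int : Integrable σ μ)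
    (C : ℝ) (hC : 0 ≤ C)
    (hbound : ∀ f g : Ω → ℝ, Measurable f → Measurable g → 0 ≤ f → 0 ≤ g →
      Integrable (fun x => f x * σ x) μ → Integrable (fun x => g x * ω x) μ →
      Integrable (fun x => f x ^ p * σ x) μ →
      Integrable (fun x => g x ^ (q / (q - 1)) * ω x) μ →
      ∫⁻ x, ∑' i : ℤ, ENNReal.ofReal
          (α i x * (μ[fun y => f y * σ y|ℱ i]) x * (μ[fun y => g y * ω y|ℱ i]) x) ∂μ
        ≤ ENNReal.ofReal (C * (∫ x, f x ^ p * σ x ∂μ) ^ (1 / p)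
            * (∫ x, g x ^ (q / (q - 1)) * ω x ∂μ) ^ (1 - 1 / q))) :
    ∀ i : ℤ, ∀ E : Set Ω, MeasurableSet[ℱ i] E → μ E < ∞ →
      ((∫⁻ x in E, (∑' j : {j : ℤ // i ≤ j},
            ENNReal.ofReal ((μ[σ|ℱ j.1]) x * α j.1 x)) ^ q
          * ENNReal.ofReal (ω x) ∂μ) ^ (1 / q)
        ≤ ENNReal.ofReal C * (∫⁻ x in E, ENNReal.ofReal (σ x) ∂μ) ^ (1 / p))
      ∧ ((∫⁻ x in E, (∑' j : {j : ℤ // i ≤ j},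
            ENNReal.ofReal ((μ[ω|ℱ j.1]) x * α j.1 x)) ^ (p / (p - 1))
          * ENNReal.ofReal (σ x) ∂μ) ^ (1 - 1 / p)
        ≤ ENNReal.ofReal C * (∫⁻ x in E, ENNReal.ofReal (ω x) ∂μ) ^ (1 - 1 / q)) :=
  testing_conditions_necessary_general ℱ p q hp hpq α hα_meas ω σ hω_nonneg hσ_nonneg hω_int hσ_int
    C hbound
end

section
/- Let i∈ℤ, h ∈ 𝓛⁺, k∈ℤ and Ω₀ ∈ 𝓕_i⁰, and set P₀ = {2^{k-1} < 𝔼_i(h) ≤ 2^k} ∩ Ω₀. Define the 'stopped' set E(P₀) = P₀ ∩ ⋂_{j≥i} {𝔼_j(h) ≤ 2^{k+1}} (i.e. P₀ ∩ {τ = ∞} where τ = inf{j ≥ i : 𝔼_j(h) > 2^{k+1}}). Then μ(P₀) ≤ 2 μ(E(P₀)). -/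
open MeasureTheory
open scoped ENNReal

/-!
The first times `j ≥ i` at which `𝔼_j(h)` exceeds `2^(k+1)` split `P₀ \ E(P₀)` into disjoint
pieces `B_n ∈ 𝓕_{i+n}`, and on each of them `2^(k+1) μ(B_n) ≤ ∫_{B_n} 𝔼_{i+n}(h) = ∫_{B_n} h`.
Summing and using `h ≥ 0` gives `2^(k+1) μ(P₀ \ E(P₀)) ≤ ∫_{P₀} h = ∫_{P₀} 𝔼_i(h) ≤ 2^k μ(P₀)`:
at most half of `P₀` escapes `E(P₀)`.
-/

theorem Set.setOf_exists_ge_eq_iUnion_nat {Ω : Type*} (i : ℤ) (p : ℤ → Ω → Prop) :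
    {x | ∃ j, i ≤ j ∧ p j x} = ⋃ n : ℕ, {x | p (i + n) x} := by
  ext x
  simp only [Set.mem_ofPred_eq, Set.mem_iUnion]
  constructor
  · rintro ⟨j, hij, hj⟩
    exact ⟨(j - i).toNat, by rwa [Int.toNat_of_nonneg (sub_nonneg.mpr hij), add_sub_cancel]⟩
  · rintro ⟨n, hn⟩
    exact ⟨i + n, by omega, hn⟩

namespace MeasureTheory

variable {Ω : Type*} {m : MeasurableSpace Ω} {μ : Measure Ω}

section Markov

variable {m' : MeasurableSpace Ω} {h : Ω → ℝ} {s : Set Ω} {c : ℝ}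

theorem mul_measureReal_le_setIntegral_of_le_condExp (hm : m' ≤ m) [SigmaFinite (μ.trim hm)]
    (hh : Integrable h μ) (hs : MeasurableSet[m'] s) (hμs : μ s ≠ ∞) (hc : ∀ x ∈ s, c ≤ μ[h|m'] x) :
    c * μ.real s ≤ ∫ x in s, h x ∂μ := by
  rw [← setIntegral_condExp hm hh hs]
  exact setIntegral_ge_of_const_le_real (hm s hs) hμs hc integrable_condExp.integrableOn

theorem setIntegral_le_mul_measureReal_of_condExp_le (hm : m' ≤ m) [SigmaFinite (μ.trim hm)]
    (hh : Integrable h μ) (hs : MeasurableSet[m'] s) (hμs : μ s ≠ ∞) (hc : ∀ x ∈ s, μ[h|m'] x ≤ c) :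
    ∫ x in s, h x ∂μ ≤ c * μ.real s := by
  rw [← setIntegral_condExp hm hh hs, mul_comm, ← smul_eq_mul, ← setIntegral_const]
  exact setIntegral_mono_on integrable_condExp.integrableOn (integrableOn_const hμs) (hm s hs) hc

end Markov

theorem mul_measureReal_iUnion_le_setIntegral {h : Ω → ℝ} {c : ℝ} {B : ℕ → Set Ω}
    (hB : ∀ n, MeasurableSet (B n)) (hB_disj : Pairwise (Function.onFun Disjoint B))
    (hB_fin : μ (⋃ n, B n) ≠ ∞) (hh : IntegrableOn h (⋃ n, B n) μ)
    (hle : ∀ n, c * μ.real (B n) ≤ ∫ x in B n, h x ∂μ) :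
    c * μ.real (⋃ n, B n) ≤ ∫ x in ⋃ n, B n, h x ∂μ := by
  have hsub : ∀ s, s ⊆ ⋃ n, B n → ∫ x in s, (h x - c) ∂μ = ∫ x in s, h x ∂μ - c * μ.real s :=
    fun s hs => by
      have hs_fin := ne_top_of_le_ne_top hB_fin (measure_mono hs)
      rw [integral_sub (hh.mono_set hs) (integrableOn_const hs_fin), setIntegral_const, smul_eq_mul,
        mul_comm]
  have hsum := hasSum_integral_iUnion (f := fun x => h x - c) hB hB_disj
    (hh.sub (integrableOn_const hB_fin))
  have := hsum.nonneg fun n => by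
    rw [hsub _ (Set.subset_iUnion B n)]
    exact sub_nonneg.mpr (hle n)
  rw [hsub _ subset_rfl] at this
  exact sub_nonneg.mp this

theorem mul_measureReal_exceedance_le_setIntegral (ℱ : Filtration ℤ m)
    [SigmaFiniteFiltration μ ℱ] {h : Ω → ℝ} (hh_nonneg : 0 ≤ h) (hh_int : Integrable h μ)
    {i : ℤ} {S : Set Ω} (hS : MeasurableSet[ℱ i] S) (hS_fin : μ S ≠ ∞) (c : ℝ) :
    c * μ.real (S ∩ {x | ∃ j, i ≤ j ∧ c < μ[h|ℱ j] x}) ≤ ∫ x in S, h x ∂μ := by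
  set T : ℕ → Set Ω := fun n => S ∩ {x | c < μ[h|ℱ (i + n)] x}
  have hT : ∀ n : ℕ, MeasurableSet[ℱ (i + n)] (T n) := fun n =>
    (ℱ.mono (by omega) _ hS).inter
      (measurableSet_lt measurable_const stronglyMeasurable_condExp.measurable)
  have hB : ∀ n : ℕ, MeasurableSet[ℱ (i + n)] (disjointed T n) := fun n => by
    rw [disjointed_eq_inter_compl]
    exact (hT n).inter <| .biInter (Set.to_countable _) fun s hs =>
      (ℱ.mono (by have : s < n := hs; omega) _ (hT s)).compl
  have hA : S ∩ {x | ∃ j, i ≤ j ∧ c < μ[h|ℱ j] x} = ⋃ n, disjointed T n := by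
    rw [iUnion_disjointed, ← Set.inter_iUnion, Set.setOf_exists_ge_eq_iUnion_nat]
  have hA_sub : ⋃ n, disjointed T n ⊆ S := hA ▸ Set.inter_subset_left
  have hA_fin : μ (⋃ n, disjointed T n) ≠ ∞ := ne_top_of_le_ne_top hS_fin (measure_mono hA_sub)
  rw [hA]
  calc c * μ.real (⋃ n, disjointed T n) ≤ ∫ x in ⋃ n, disjointed T n, h x ∂μ := by
        refine mul_measureReal_iUnion_le_setIntegral (fun n => ℱ.le _ _ (hB n))
          (disjoint_disjointed T) hA_fin hh_int.integrableOn fun n => ?_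
        refine mul_measureReal_le_setIntegral_of_le_condExp (ℱ.le _) hh_int (hB n)
          (ne_top_of_le_ne_top hA_fin (measure_mono (Set.subset_iUnion _ n))) fun x hx => ?_
        exact (disjointed_subset T n hx).2.le
    _ ≤ ∫ x in S, h x ∂μ :=
        setIntegral_mono_set hh_int.integrableOn (.of_forall hh_nonneg) hA_sub.eventuallyLE

theorem measure_le_two_mul_of_subset_union {P E A : Set Ω} (hP : μ P ≠ ∞) (hPEA : P ⊆ E ∪ A)
    (hA : 2 * μ A ≤ μ P) : μ P ≤ 2 * μ E := by
  refine ENNReal.le_of_add_le_add_right hP ?_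
  calc μ P + μ P = 2 * μ P := (two_mul _).symm
    _ ≤ 2 * (μ E + μ A) := by gcongr; exact (measure_mono hPEA).trans (measure_union_le E A)
    _ ≤ 2 * μ E + μ P := by rw [mul_add]; gcongr

end MeasureTheory

theorem principal_set_measure_estimate_general
    {Ω : Type*} {m : MeasurableSpace Ω} {μ : Measure Ω}
    (ℱ : Filtration ℤ m) [SigmaFiniteFiltration μ ℱ]
    (i : ℤ) (h : Ω → ℝ) (hh_nonneg : 0 ≤ h)
    (hh_int : Integrable h μ)
    (k : ℤ) (Ω₀ : Set Ω) (hΩ₀_meas : MeasurableSet[ℱ i] Ω₀) (hΩ₀_fin : μ Ω₀ < ∞) :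
    μ ({x | (2 : ℝ) ^ (k - 1) < (μ[h|ℱ i]) x ∧ (μ[h|ℱ i]) x ≤ (2 : ℝ) ^ k} ∩ Ω₀)
      ≤ 2 * μ (({x | (2 : ℝ) ^ (k - 1) < (μ[h|ℱ i]) x ∧ (μ[h|ℱ i]) x ≤ (2 : ℝ) ^ k} ∩ Ω₀)
          ∩ ⋂ j ∈ {j : ℤ | i ≤ j}, {x | (μ[h|ℱ j]) x ≤ (2 : ℝ) ^ (k + 1)}) := by
  set P₀ := {x | (2 : ℝ) ^ (k - 1) < (μ[h|ℱ i]) x ∧ (μ[h|ℱ i]) x ≤ (2 : ℝ) ^ k} ∩ Ω₀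
  set A := P₀ ∩ {x | ∃ j, i ≤ j ∧ (2 : ℝ) ^ (k + 1) < μ[h|ℱ j] x}
  have hP₀ : MeasurableSet[ℱ i] P₀ := by
    have hg := (stronglyMeasurable_condExp (m := ℱ i) (μ := μ) (f := h)).measurable
    exact ((measurableSet_lt measurable_const hg).inter
      (measurableSet_le hg measurable_const)).inter hΩ₀_meas
  have hP₀_fin : μ P₀ ≠ ∞ := ne_top_of_le_ne_top hΩ₀_fin.ne (measure_mono Set.inter_subset_right)
  have hA_real : 2 * μ.real A ≤ μ.real P₀ := by
    have hmax := (mul_measureReal_exceedance_le_setIntegral ℱ hh_nonneg hh_int hP₀ hP₀_fin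
      ((2 : ℝ) ^ (k + 1))).trans
      (setIntegral_le_mul_measureReal_of_condExp_le (ℱ.le i) hh_int hP₀ hP₀_fin
        fun x hx => hx.1.2)
    refine le_of_mul_le_mul_left (a := (2 : ℝ) ^ k) ?_ (zpow_pos two_pos k)
    calc (2 : ℝ) ^ k * (2 * μ.real A) = 2 ^ (k + 1) * μ.real A := by
          rw [zpow_add_one₀ two_ne_zero]; ring
      _ ≤ 2 ^ k * μ.real P₀ := hmax
  have hA : 2 * μ A ≤ μ P₀ := by
    rwa [← ENNReal.toReal_le_toReal (by finiteness) hP₀_fin, ENNReal.toReal_mul,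
      ENNReal.toReal_ofNat]
  refine measure_le_two_mul_of_subset_union hP₀_fin (fun x hx => ?_) hA
  rw [Set.mem_union, or_iff_not_imp_left]
  intro hxE
  simp only [Set.mem_inter_iff, Set.mem_iInter, not_and, not_forall] at hxE
  obtain ⟨j, hij, hj⟩ := hxE hx
  exact ⟨hx, j, hij, lt_of_not_ge hj⟩

/-- **Measure estimate for principal sets.**  For
`P₀ = {2^{k-1} < 𝔼ᵢ(h) ≤ 2^k} ∩ Ω₀` and the stopped set
`E(P₀) = P₀ ∩ ⋂_{j ≥ i} {𝔼_j(h) ≤ 2^{k+1}}`, one has `μ(P₀) ≤ 2 μ(E(P₀))`. -/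
theorem principal_set_measure_estimate
    {Ω : Type*} {m : MeasurableSpace Ω} {μ : Measure Ω} [SigmaFinite μ]
    (ℱ : Filtration ℤ m) [SigmaFiniteFiltration μ ℱ]
    (i : ℤ) (h : Ω → ℝ) (hh_nonneg : 0 ≤ h) (hh_meas : Measurable h)
    (hh_int : Integrable h μ)
    (k : ℤ) (Ω₀ : Set Ω) (hΩ₀_meas : MeasurableSet[ℱ i] Ω₀) (hΩ₀_fin : μ Ω₀ < ∞) :
    μ ({x | (2 : ℝ) ^ (k - 1) < (μ[h|ℱ i]) x ∧ (μ[h|ℱ i]) x ≤ (2 : ℝ) ^ k} ∩ Ω₀)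
      ≤ 2 * μ (({x | (2 : ℝ) ^ (k - 1) < (μ[h|ℱ i]) x ∧ (μ[h|ℱ i]) x ≤ (2 : ℝ) ^ k} ∩ Ω₀)
          ∩ ⋂ j ∈ {j : ℤ | i ≤ j}, {x | (μ[h|ℱ j]) x ≤ (2 : ℝ) ^ (k + 1)}) :=
  principal_set_measure_estimate_general ℱ i h hh_nonneg hh_int k Ω₀ hΩ₀_meas hΩ₀_fin
end

section
/- Let i∈ℤ, h ∈ 𝓛⁺, k∈ℤ and Ω₀ ∈ 𝓕_i⁰, and set P₀ = {2^{k-1} < 𝔼_i(h) ≤ 2^k} ∩ Ω₀ and E(P₀) = P₀ ∩ ⋂_{j≥i} {𝔼_j(h) ≤ 2^{k+1}}. Then the conditional sparsity property holds: χ_{P₀} ≤ 2 𝔼_i(χ_{E(P₀)}) μ-a.e. on P₀, i.e. χ_{P₀} ≤ 2 𝔼_i(χ_{E(P₀)}) χ_{P₀} μ-a.e. -/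
/-!
Cut `T ∩ ⋃_{j ≥ i} {𝔼_j h > c}` according to the first `j` at which `𝔼_j h > c`: each piece lies
in `ℱ_j`, so on it `∫ h = ∫ 𝔼_j h ≥ c μ`, and summing gives the maximal inequality
`c μ(T ∩ ⋃_{j ≥ i} {𝔼_j h > c}) ≤ ∫_T h` for `T ∈ ℱ_i`. If `T ⊆ P₀`, then
`∫_T h = ∫_T 𝔼_i h ≤ 2^k μ T`, so with `c = 2^{k+1}` at least half of `T` stays in `E(P₀)`.
As this holds for every `ℱ_i`-measurable `T ⊆ P₀` of finite measure, `𝔼_i(χ_{E(P₀)}) ≥ 1/2`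
a.e. on `P₀`.
-/

open MeasureTheory
open scoped ENNReal

lemma Int.iUnion_ge_eq_iUnion_add_nat {α : Type*} (S : ℤ → Set α) (i : ℤ) :
    ⋃ j ≥ i, S j = ⋃ n : ℕ, S (i + n) := by
  ext x
  simp only [Set.mem_iUnion, exists_prop]
  constructor
  · rintro ⟨j, hij, hx⟩
    exact ⟨(j - i).toNat, by rwa [show i + ((j - i).toNat : ℤ) = j by omega]⟩
  · rintro ⟨n, hx⟩
    exact ⟨i + n, by omega, hx⟩

lemma measurableSet_disjointed_of_monotone {Ω : Type*} {𝒢 : ℕ → MeasurableSpace Ω}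
    (h𝒢 : Monotone 𝒢) {B : ℕ → Set Ω} (hB : ∀ n, MeasurableSet[𝒢 n] (B n)) (n : ℕ) :
    MeasurableSet[𝒢 n] (disjointed B n) := by
  rw [disjointed_eq_inter_compl]
  exact (hB n).inter <| .biInter (Set.to_countable _) fun j hj ↦ (h𝒢 (le_of_lt hj) _ (hB j)).compl

namespace MeasureTheory

variable {Ω : Type*} {m₀ : MeasurableSpace Ω} {μ : Measure Ω}

theorem mul_measureReal_inter_iUnion_lt_condExp_le_setIntegral (ℱ : Filtration ℤ m₀)
    [SigmaFiniteFiltration μ ℱ] {h : Ω → ℝ} (hh_nonneg : 0 ≤ h) (hh : Integrable h μ) {i : ℤ}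
    {T : Set Ω} (hT : MeasurableSet[ℱ i] T) (hTfin : μ T ≠ ∞) (c : ℝ) :
    c * μ.real (T ∩ ⋃ j ≥ i, {x | c < μ[h|ℱ j] x}) ≤ ∫ x in T, h x ∂μ := by
  set B : ℕ → Set Ω := fun n ↦ {x | c < μ[h|ℱ (i + n)] x}
  have hB : ∀ n : ℕ, MeasurableSet[ℱ (i + n)] (B n) := fun n ↦
    measurableSet_lt measurable_const stronglyMeasurable_condExp.measurable
  have hD : ∀ n : ℕ, MeasurableSet[ℱ (i + n)] (T ∩ disjointed B n) := fun n ↦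
    (ℱ.mono (by omega) _ hT).inter <|
      measurableSet_disjointed_of_monotone (fun a b hab ↦ ℱ.mono (by omega)) hB n
  have hUnion : T ∩ ⋃ j ≥ i, {x | c < μ[h|ℱ j] x} = ⋃ n, T ∩ disjointed B n := by
    rw [← Set.inter_iUnion, iUnion_disjointed, Int.iUnion_ge_eq_iUnion_add_nat]
  have hdisj : Pairwise (Function.onFun Disjoint fun n ↦ T ∩ disjointed B n) :=
    (disjoint_disjointed B).mono fun _ _ hd ↦ hd.mono Set.inter_subset_right Set.inter_subset_right
  have hDmeas : ∀ n, MeasurableSet (T ∩ disjointed B n) := fun n ↦ ℱ.le _ _ (hD n)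
  have hfin : μ (T ∩ ⋃ j ≥ i, {x | c < μ[h|ℱ j] x}) ≠ ∞ :=
    measure_ne_top_of_subset Set.inter_subset_left hTfin
  have hpiece : ∀ n, ∫ _ in T ∩ disjointed B n, c ∂μ ≤ ∫ x in T ∩ disjointed B n, h x ∂μ := by
    intro n
    rw [← setIntegral_condExp (ℱ.le _) hh (hD n)]
    exact setIntegral_mono_on
      (integrableOn_const (measure_ne_top_of_subset Set.inter_subset_left hTfin))
      integrable_condExp.integrableOn (hDmeas n) fun x hx ↦ (disjointed_subset B n hx.2).le
  calc c * μ.real (T ∩ ⋃ j ≥ i, {x | c < μ[h|ℱ j] x})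
      = ∫ _ in T ∩ ⋃ j ≥ i, {x | c < μ[h|ℱ j] x}, c ∂μ := by
        rw [setIntegral_const, smul_eq_mul, mul_comm]
    _ ≤ ∫ x in T ∩ ⋃ j ≥ i, {x | c < μ[h|ℱ j] x}, h x ∂μ := by
        rw [hUnion] at hfin ⊢
        exact hasSum_le hpiece
          (hasSum_integral_iUnion hDmeas hdisj (integrableOn_const hfin))
          (hasSum_integral_iUnion hDmeas hdisj hh.integrableOn)
    _ ≤ ∫ x in T, h x ∂μ :=
        setIntegral_mono_set hh.integrableOn (.of_forall hh_nonneg)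
          Set.inter_subset_left.eventuallyLE

theorem measureReal_le_two_mul_measureReal_diff_iUnion_lt_condExp (ℱ : Filtration ℤ m₀)
    [SigmaFiniteFiltration μ ℱ] {h : Ω → ℝ} (hh_nonneg : 0 ≤ h) (hh : Integrable h μ) {i : ℤ}
    {T : Set Ω} (hT : MeasurableSet[ℱ i] T) (hTfin : μ T ≠ ∞) {c : ℝ} (hc : 0 < c)
    (hTc : ∀ x ∈ T, μ[h|ℱ i] x ≤ c) :
    μ.real T ≤ 2 * μ.real (T \ ⋃ j ≥ i, {x | 2 * c < μ[h|ℱ j] x}) := by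
  set U := ⋃ j ≥ i, {x | 2 * c < μ[h|ℱ j] x}
  have hU : MeasurableSet U := .biUnion (Set.to_countable _) fun j _ ↦
    ℱ.le j _ (measurableSet_lt measurable_const stronglyMeasurable_condExp.measurable)
  have hT_int : ∫ x in T, h x ∂μ ≤ c * μ.real T := by
    rw [← setIntegral_condExp (ℱ.le i) hh hT]
    calc ∫ x in T, μ[h|ℱ i] x ∂μ ≤ ∫ _ in T, c ∂μ :=
          setIntegral_mono_on integrable_condExp.integrableOn (integrableOn_const hTfin)
            (ℱ.le i _ hT) hTc
      _ = c * μ.real T := by rw [setIntegral_const, smul_eq_mul, mul_comm]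
  have hmax :=
    mul_measureReal_inter_iUnion_lt_condExp_le_setIntegral ℱ hh_nonneg hh hT hTfin (2 * c)
  have hsplit : μ.real (T ∩ U) + μ.real (T \ U) = μ.real T := measureReal_inter_add_sdiff hU hTfin
  have hhalf : 2 * μ.real (T ∩ U) ≤ μ.real T := le_of_mul_le_mul_left (by linarith) hc
  linarith

theorem ae_le_condExp_of_forall_mul_measureReal_le_setIntegral {m : MeasurableSpace Ω}
    (hm : m ≤ m₀) [SigmaFinite (μ.trim hm)] {f : Ω → ℝ} (hf : Integrable f μ) {P : Set Ω}
    (hP : MeasurableSet[m] P) {a : ℝ}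
    (hfP : ∀ s, MeasurableSet[m] s → s ⊆ P → μ s < ∞ → a * μ.real s ≤ ∫ x in s, f x ∂μ) :
    ∀ᵐ x ∂μ, x ∈ P → a ≤ μ[f|m] x := by
  set g := P.indicator fun x ↦ μ[f|m] x - a
  have hg : StronglyMeasurable[m] g :=
    (stronglyMeasurable_condExp.sub stronglyMeasurable_const).indicator hP
  have : 0 ≤ᵐ[μ.trim hm] g := by
    refine ae_nonneg_of_forall_setIntegral_nonneg_of_sigmaFinite (fun s hs hμs ↦ ?_)
      fun s hs hμs ↦ ?_ <;> rw [trim_measurableSet_eq hm hs] at hμs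
    · have : IsFiniteMeasure (μ.restrict s) := isFiniteMeasure_restrict.mpr hμs.ne
      rw [IntegrableOn, restrict_trim hm μ hs]
      exact ((integrable_condExp.integrableOn.sub (integrable_const a)).indicator
        (hm _ hP)).trim hm hg
    have hsP : μ (s ∩ P) < ∞ := (measure_mono Set.inter_subset_left).trans_lt hμs
    rw [← setIntegral_trim hm hg hs, setIntegral_indicator (hm _ hP), integral_sub
      integrable_condExp.integrableOn (integrableOn_const (C := a) hsP.ne),
      setIntegral_condExp hm hf (hs.inter hP), setIntegral_const, smul_eq_mul, mul_comm, sub_nonneg]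
    exact hfP _ (hs.inter hP) Set.inter_subset_right hsP
  filter_upwards [ae_of_ae_trim hm this] with x hx hxP
  simpa [g, hxP] using hx

end MeasureTheory

theorem principal_set_conditional_sparsity_general
    {Ω : Type*} {m : MeasurableSpace Ω} {μ : Measure Ω}
    (ℱ : Filtration ℤ m) [SigmaFiniteFiltration μ ℱ]
    (i : ℤ) (h : Ω → ℝ) (hh_nonneg : 0 ≤ h)
    (hh_int : Integrable h μ)
    (k : ℤ) (Ω₀ : Set Ω) (hΩ₀_meas : MeasurableSet[ℱ i] Ω₀) (hΩ₀_fin : μ Ω₀ < ∞)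
    (P₀ EP₀ : Set Ω)
    (hP₀ : P₀ = {x | (2 : ℝ) ^ (k - 1) < (μ[h|ℱ i]) x ∧ (μ[h|ℱ i]) x ≤ (2 : ℝ) ^ k} ∩ Ω₀)
    (hEP₀ : EP₀ = P₀ ∩ ⋂ j ∈ {j : ℤ | i ≤ j}, {x | (μ[h|ℱ j]) x ≤ (2 : ℝ) ^ (k + 1)}) :
    ∀ᵐ x ∂μ, x ∈ P₀ →
      (1 : ℝ) ≤ 2 * (μ[EP₀.indicator (fun _ => (1 : ℝ))|ℱ i]) x := by
  have hP₀_meas : MeasurableSet[ℱ i] P₀ := by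
    rw [hP₀, Set.ofPred_and]
    exact ((measurableSet_lt measurable_const stronglyMeasurable_condExp.measurable).inter
      (measurableSet_le stronglyMeasurable_condExp.measurable measurable_const)).inter hΩ₀_meas
  have hEP₀_meas : MeasurableSet EP₀ := hEP₀ ▸ (ℱ.le i _ hP₀_meas).inter
    (.biInter (Set.to_countable _) fun j _ ↦
      ℱ.le j _ (measurableSet_le stronglyMeasurable_condExp.measurable measurable_const))
  have hEP₀_fin : μ EP₀ ≠ ∞ := measure_ne_top_of_subset
    (by rw [hEP₀, hP₀]; exact Set.inter_subset_left.trans Set.inter_subset_right) hΩ₀_fin.ne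
  have hhalf : ∀ s, MeasurableSet[ℱ i] s → s ⊆ P₀ → μ s < ∞ →
      1 / 2 * μ.real s ≤ ∫ x in s, EP₀.indicator (fun _ ↦ (1 : ℝ)) x ∂μ := by
    intro s hs hsP hμs
    have hbound : ∀ x ∈ s, μ[h|ℱ i] x ≤ 2 ^ k := fun x hx ↦ (hP₀ ▸ hsP hx).1.2
    have hsE : s ∩ EP₀ = s \ ⋃ j ≥ i, {x | 2 * 2 ^ k < μ[h|ℱ j] x} := by
      rw [show (2 : ℝ) * 2 ^ k = 2 ^ (k + 1) by rw [zpow_add_one₀ two_ne_zero, mul_comm]]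
      ext x
      simp only [hEP₀, Set.mem_inter_iff, Set.mem_sdiff, Set.mem_iInter, Set.mem_iUnion,
        Set.mem_ofPred_eq, not_exists, not_lt]
      exact ⟨fun ⟨hxs, _, hle⟩ ↦ ⟨hxs, hle⟩, fun ⟨hxs, hle⟩ ↦ ⟨hxs, hsP hxs, hle⟩⟩
    rw [setIntegral_indicator hEP₀_meas, setIntegral_const, smul_eq_mul, mul_one, hsE]
    linarith [measureReal_le_two_mul_measureReal_diff_iUnion_lt_condExp ℱ hh_nonneg hh_int hs
      hμs.ne (by positivity) hbound]
  filter_upwards [ae_le_condExp_of_forall_mul_measureReal_le_setIntegral (ℱ.le i)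
    (integrable_indicator_iff hEP₀_meas |>.mpr (integrableOn_const hEP₀_fin)) hP₀_meas hhalf]
    with x hx hxP
  linarith [hx hxP]

/-- **Conditional sparsity of principal sets** (Property P.3).  For
`P₀ = {2^{k-1} < 𝔼ᵢ(h) ≤ 2^k} ∩ Ω₀` and the stopped set
`E(P₀) = P₀ ∩ ⋂_{j ≥ i} {𝔼_j(h) ≤ 2^{k+1}}`, one has
`χ_{P₀} ≤ 2 𝔼ᵢ(χ_{E(P₀)})` μ-a.e. on `P₀`. -/
theorem principal_set_conditional_sparsity
    {Ω : Type*} {m : MeasurableSpace Ω} {μ : Measure Ω} [SigmaFinite μ]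
    (ℱ : Filtration ℤ m) [SigmaFiniteFiltration μ ℱ]
    (i : ℤ) (h : Ω → ℝ) (hh_nonneg : 0 ≤ h) (hh_meas : Measurable h)
    (hh_int : Integrable h μ)
    (k : ℤ) (Ω₀ : Set Ω) (hΩ₀_meas : MeasurableSet[ℱ i] Ω₀) (hΩ₀_fin : μ Ω₀ < ∞)
    (P₀ EP₀ : Set Ω)
    (hP₀ : P₀ = {x | (2 : ℝ) ^ (k - 1) < (μ[h|ℱ i]) x ∧ (μ[h|ℱ i]) x ≤ (2 : ℝ) ^ k} ∩ Ω₀)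
    (hEP₀ : EP₀ = P₀ ∩ ⋂ j ∈ {j : ℤ | i ≤ j}, {x | (μ[h|ℱ j]) x ≤ (2 : ℝ) ^ (k + 1)}) :
    ∀ᵐ x ∂μ, x ∈ P₀ →
      (1 : ℝ) ≤ 2 * (μ[EP₀.indicator (fun _ => (1 : ℝ))|ℱ i]) x :=
  principal_set_conditional_sparsity_general ℱ i h hh_nonneg hh_int k Ω₀ hΩ₀_meas hΩ₀_fin P₀ EP₀ hP₀
    hEP₀
end

section
/- (Testing estimate under A_p and A*_∞.) Let 1<p<∞ with conjugate exponent p', and let v, ω be weights with σ := ω^{1-p'} ∈ 𝓛⁺. Suppose (v,ω) satisfies the two-weight A_p condition with constant [v,ω]_{A_p}, the smallest C such that sup_{j∈ℤ} 𝔼_j(v) 𝔼_j(ω^{1-p'})^{p/p'} ≤ C μ-a.e., and σ satisfies the A*_∞ condition with constant [σ]_{A*_∞}, the smallest C such that ∫_E *M_i(σχ_E) dμ ≤ C σ(E) for all i∈ℤ and E∈𝓕_i⁰. Then there is an absolute constant C' such that for every i∈ℤ and E∈𝓕_i⁰, ∫_E (*M_i(σ χ_E))^p v dμ ≤ C' [v,ω]_{A_p}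 [σ]_{A*_∞} σ(E). -/
/-!
Stopping at the first index `j ≥ i` at which `|𝔼_j(σχ_E)|` exceeds `t` splits
`E ∩ {*Mᵢ(σχ_E) > t}` into disjoint sets of `𝓕_j` on which `𝔼_j σ > t`. There the `A_p`
condition forces `𝔼_j v ≤ [v,ω]_{A_p} t^{1-p}`, so
`v(E ∩ {*Mᵢ > t}) ≤ [v,ω]_{A_p} t^{1-p} μ(E ∩ {*Mᵢ > t})`. Integrating against `p t^{p-1} dt`
(layer cake) turns this into `∫_E (*Mᵢ)^p v ≤ p [v,ω]_{A_p} ∫_E *Mᵢ(σχ_E)`, and `A*_∞` bounds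
the last integral by `[σ]_{A*_∞} σ(E)`.
-/

open MeasureTheory Filter Set Function
open scoped ENNReal

namespace MeasureTheory

lemma lintegral_rpow_le_of_meas_lt_mul_rpow_le {Ω : Type*} {m : MeasurableSpace Ω}
    {ν μ : Measure Ω} (hνμ : ν ≪ μ) {M : Ω → ℝ≥0∞} (hM : Measurable M)
    (hM_fin : ∀ᵐ x ∂μ, M x ≠ ∞) {p : ℝ} (hp : 0 < p) {C : ℝ≥0∞}
    (h : ∀ t : ℝ, 0 < t → ν {x | ENNReal.ofReal t < M x} * ENNReal.ofReal (t ^ (p - 1))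
      ≤ C * μ {x | ENNReal.ofReal t < M x}) :
    ∫⁻ x, M x ^ p ∂ν ≤ ENNReal.ofReal p * C * ∫⁻ x, M x ∂μ := by
  set F : Ω → ℝ := fun x => (M x).toReal
  have hF : Measurable F := hM.ennreal_toReal
  have hF_nonneg : ∀ x, 0 ≤ F x := fun x => ENNReal.toReal_nonneg
  have hMF : ∀ᵐ x ∂μ, M x = ENNReal.ofReal (F x) :=
    hM_fin.mono fun x hx => (ENNReal.ofReal_toReal hx).symm
  have hlevel : ∀ t : ℝ, 0 < t →
      ν {x | t < F x} * ENNReal.ofReal (t ^ (p - 1)) ≤ C * μ {x | t < F x} := by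
    intro t ht
    have hsub : {x | t < F x} ⊆ {x | ENNReal.ofReal t < M x} := fun x hx =>
      (ENNReal.ofReal_lt_iff_lt_toReal ht.le fun h => by simp [F, h] at hx; linarith).2 hx
    have hae : {x | ENNReal.ofReal t < M x} =ᵐ[μ] {x | t < F x} := by
      filter_upwards [hMF] with x hx
      change (ENNReal.ofReal t < M x) = (t < F x)
      rw [hx, ENNReal.ofReal_lt_ofReal_iff_of_nonneg ht.le]
    calc ν {x | t < F x} * ENNReal.ofReal (t ^ (p - 1))
        ≤ ν {x | ENNReal.ofReal t < M x} * ENNReal.ofReal (t ^ (p - 1)) := by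
          gcongr
      _ ≤ C * μ {x | t < F x} := (h t ht).trans_eq (by rw [measure_congr hae])
  calc ∫⁻ x, M x ^ p ∂ν = ∫⁻ x, ENNReal.ofReal (F x ^ p) ∂ν :=
        lintegral_congr_ae <| by
          filter_upwards [hνμ.ae_le hMF] with x hx
          rw [hx, ENNReal.ofReal_rpow_of_nonneg (hF_nonneg x) hp.le]
    _ = ENNReal.ofReal p * ∫⁻ t in Ioi 0, ν {x | t < F x} * ENNReal.ofReal (t ^ (p - 1)) :=
        lintegral_rpow_eq_lintegral_meas_lt_mul ν (ae_of_all _ hF_nonneg) hF.aemeasurable hp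
    _ ≤ ENNReal.ofReal p * ∫⁻ t in Ioi 0, C * μ {x | t < F x} :=
        mul_le_mul_right (setLIntegral_mono' measurableSet_Ioi hlevel) _
    _ = ENNReal.ofReal p * C * ∫⁻ x, ENNReal.ofReal (F x) ∂μ := by
        have hanti : Antitone fun t : ℝ => μ {x | t < F x} := fun a b hab =>
          measure_mono fun x hx => hab.trans_lt hx
        rw [lintegral_const_mul C hanti.measurable,
          lintegral_eq_lintegral_meas_lt μ (ae_of_all _ hF_nonneg) hF.aemeasurable, mul_assoc]
    _ ≤ ENNReal.ofReal p * C * ∫⁻ x, M x ∂μ := by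
        gcongr
        exact ENNReal.ofReal_toReal_le

lemma setLIntegral_ofReal_le_of_condExp_le {Ω : Type*} {m m₀ : MeasurableSpace Ω}
    {μ : Measure Ω} (hm : m ≤ m₀) [SigmaFinite (μ.trim hm)] {v : Ω → ℝ} (hv : Integrable v μ)
    (hv_nonneg : 0 ≤ᵐ[μ] v) {A : Set Ω} (hA : MeasurableSet[m] A) {c : ℝ}
    (hc : ∀ᵐ x ∂μ, x ∈ A → μ[v|m] x ≤ c) :
    ∫⁻ x in A, ENNReal.ofReal (v x) ∂μ ≤ ENNReal.ofReal c * μ A :=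
  calc ∫⁻ x in A, ENNReal.ofReal (v x) ∂μ = ENNReal.ofReal (∫ x in A, v x ∂μ) :=
        (ofReal_integral_eq_lintegral_ofReal hv.integrableOn (ae_restrict_of_ae hv_nonneg)).symm
    _ = ENNReal.ofReal (∫ x in A, μ[v|m] x ∂μ) := by rw [setIntegral_condExp hm hv hA]
    _ = ∫⁻ x in A, ENNReal.ofReal (μ[v|m] x) ∂μ :=
        ofReal_integral_eq_lintegral_ofReal integrable_condExp.integrableOn
          (ae_restrict_of_ae (condExp_nonneg hv_nonneg))
    _ ≤ ∫⁻ x in A, ENNReal.ofReal c ∂μ :=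
        setLIntegral_mono_ae aemeasurable_const <|
          hc.mono fun x hx hxA => ENNReal.ofReal_le_ofReal (hx hxA)
    _ = ENNReal.ofReal c * μ A := setLIntegral_const _ _

lemma le_mul_rpow_one_sub_of_mul_rpow_le {a s t C p : ℝ} (ht : 0 < t) (hts : t ≤ s)
    (ha : 0 ≤ a) (hp : 1 ≤ p) (h : a * s ^ (p - 1) ≤ C) : a ≤ C * t ^ (1 - p) := by
  have hat : a * t ^ (p - 1) ≤ C :=
    (mul_le_mul_of_nonneg_left (Real.rpow_le_rpow ht.le hts (by linarith)) ha).trans h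
  rw [show 1 - p = -(p - 1) by ring, Real.rpow_neg ht.le, ← div_eq_mul_inv]
  exact (le_div_iff₀ (Real.rpow_pos_of_pos ht _)).2 hat

section TailMaximal

variable {Ω : Type*} {m : MeasurableSpace Ω} {g : ℤ → Ω → ℝ} {i : ℤ} {t : ℝ}

/-- `tailMaximal (fun j => μ[f|ℱ j]) i` is the paper's `*Mᵢ f`. -/
noncomputable def tailMaximal (g : ℤ → Ω → ℝ) (i : ℤ) (x : Ω) : ℝ≥0∞ :=
  ⨆ j : {j : ℤ // i ≤ j}, ENNReal.ofReal |g j x|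

def firstExceedanceSet (g : ℤ → Ω → ℝ) (i : ℤ) (t : ℝ) (j : ℤ) : Set Ω :=
  {x | t < |g j x| ∧ ∀ k ∈ Ico i j, |g k x| ≤ t}

lemma ofReal_lt_tailMaximal_iff (ht : 0 ≤ t) {x : Ω} :
    ENNReal.ofReal t < tailMaximal g i x ↔ ∃ j, i ≤ j ∧ t < |g j x| := by
  simp only [tailMaximal, lt_iSup_iff, ENNReal.ofReal_lt_ofReal_iff_of_nonneg ht,
    Subtype.exists, exists_prop]

lemma measurable_tailMaximal (hg : ∀ j, Measurable (g j)) : Measurable (tailMaximal g i) :=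
  Measurable.iSup fun j => (hg j).abs.ennreal_ofReal

lemma iUnion_firstExceedanceSet (ht : 0 ≤ t) :
    ⋃ j : {j : ℤ // i ≤ j}, firstExceedanceSet g i t j
      = {x | ENNReal.ofReal t < tailMaximal g i x} := by
  ext x
  simp only [mem_iUnion, mem_ofPred_eq, ofReal_lt_tailMaximal_iff ht]
  constructor
  · rintro ⟨⟨j, hij⟩, hj, -⟩
    exact ⟨j, hij, hj⟩
  · intro hex
    obtain ⟨j, ⟨hij, hj⟩, hmin⟩ := Int.exists_least_of_bdd ⟨i, fun k hk => hk.1⟩ hex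
    exact ⟨⟨j, hij⟩, hj, fun k hk => not_lt.1 fun hk' => (hmin k ⟨hk.1, hk'⟩).not_gt hk.2⟩

lemma pairwise_disjoint_firstExceedanceSet :
    Pairwise (Disjoint on fun j : {j : ℤ // i ≤ j} => firstExceedanceSet g i t j) := by
  rintro ⟨j, hij⟩ ⟨k, hik⟩ hjk
  rw [Function.onFun, Set.disjoint_left]
  rintro x ⟨hj, hj_first⟩ ⟨hk, hk_first⟩
  rcases lt_trichotomy j k with h | rfl | h
  · exact (hk_first j ⟨hij, h⟩).not_gt hj
  · exact hjk rfl
  · exact (hj_first k ⟨hik, h⟩).not_gt hk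

lemma measurableSet_firstExceedanceSet {ℱ : Filtration ℤ m} (hg : Adapted ℱ g) (j : ℤ) :
    MeasurableSet[ℱ j] (firstExceedanceSet g i t j) := by
  have h_eq : firstExceedanceSet g i t j
      = |g j| ⁻¹' Ioi t ∩ ⋂ k ∈ Ico i j, |g k| ⁻¹' Iic t := by
    ext x
    simp [firstExceedanceSet]
  rw [h_eq]
  exact ((measurable_abs.comp (hg j)) measurableSet_Ioi).inter <|
    MeasurableSet.biInter (to_countable _) fun k hk =>
      (measurable_abs.comp ((hg k).mono (ℱ.mono hk.2.le) le_rfl)) measurableSet_Iic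

lemma restrict_setOf_lt_tailMaximal_le {ℱ : Filtration ℤ m} (hg : Adapted ℱ g)
    {ν μ : Measure Ω} {E : Set Ω} (hE : MeasurableSet[ℱ i] E) (ht : 0 ≤ t) {c : ℝ≥0∞}
    (h : ∀ j, i ≤ j → ∀ A, MeasurableSet[ℱ j] A → A ⊆ {x | t < |g j x|} → ν A ≤ c * μ A) :
    ν.restrict E {x | ENNReal.ofReal t < tailMaximal g i x}
      ≤ c * μ.restrict E {x | ENNReal.ofReal t < tailMaximal g i x} := by
  have hS : ∀ j : {j : ℤ // i ≤ j}, MeasurableSet[ℱ j] (firstExceedanceSet g i t j ∩ E) :=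
    fun j => (measurableSet_firstExceedanceSet hg j).inter (ℱ.mono j.2 _ hE)
  have hdisj :
      Pairwise (Disjoint on fun j : {j : ℤ // i ≤ j} => firstExceedanceSet g i t j ∩ E) :=
    fun j k hjk => (pairwise_disjoint_firstExceedanceSet hjk).mono inf_le_left inf_le_left
  rw [Measure.restrict_apply' (ℱ.le i E hE), Measure.restrict_apply' (ℱ.le i E hE),
    ← iUnion_firstExceedanceSet ht, iUnion_inter,
    measure_iUnion hdisj fun j => ℱ.le j _ (hS j), measure_iUnion hdisj fun j => ℱ.le j _ (hS j),
    ← ENNReal.tsum_mul_left]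
  exact ENNReal.tsum_le_tsum fun j => h j j.2 _ (hS j) fun x hx => hx.1.1

end TailMaximal

lemma withDensity_restrict_setOf_lt_tailMaximal_mul_rpow_le {Ω : Type*} {m : MeasurableSpace Ω}
    {ℱ : Filtration ℤ m} {μ : Measure Ω} [SigmaFiniteFiltration μ ℱ] {g : ℤ → Ω → ℝ}
    (hg : Adapted ℱ g) {v σ : Ω → ℝ} (hv : Integrable v μ) (hv_nonneg : 0 ≤ᵐ[μ] v) {p Ap : ℝ}
    (hp : 1 ≤ p) (hAp : ∀ j, ∀ᵐ x ∂μ, μ[v|ℱ j] x * μ[σ|ℱ j] x ^ (p - 1) ≤ Ap)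
    (hgσ : ∀ j, ∀ᵐ x ∂μ, |g j x| ≤ μ[σ|ℱ j] x) {i : ℤ} {E : Set Ω} (hE : MeasurableSet[ℱ i] E)
    {t : ℝ} (ht : 0 < t) :
    (μ.withDensity fun x => ENNReal.ofReal (v x)).restrict E
        {x | ENNReal.ofReal t < tailMaximal g i x} * ENNReal.ofReal (t ^ (p - 1))
      ≤ ENNReal.ofReal Ap * μ.restrict E {x | ENNReal.ofReal t < tailMaximal g i x} := by
  have hlevel := restrict_setOf_lt_tailMaximal_le hg hE ht.le
    (ν := μ.withDensity fun x => ENNReal.ofReal (v x)) (μ := μ)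
    (c := ENNReal.ofReal (Ap * t ^ (1 - p))) fun j _ A hA hAt => by
      rw [withDensity_apply _ (ℱ.le j A hA)]
      refine setLIntegral_ofReal_le_of_condExp_le (ℱ.le j) hv hv_nonneg hA ?_
      filter_upwards [hAp j, hgσ j, condExp_nonneg hv_nonneg] with x hAp_x hgσ_x hv_x hxA
      exact le_mul_rpow_one_sub_of_mul_rpow_le ht ((hAt hxA).le.trans hgσ_x) hv_x hp hAp_x
  calc _ ≤ ENNReal.ofReal (Ap * t ^ (1 - p))
          * μ.restrict E {x | ENNReal.ofReal t < tailMaximal g i x}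
          * ENNReal.ofReal (t ^ (p - 1)) :=
        mul_le_mul_left hlevel _
    _ = _ := by
        rw [mul_right_comm, ← ENNReal.ofReal_mul' (Real.rpow_nonneg ht.le _), mul_assoc,
          ← Real.rpow_add ht, show 1 - p + (p - 1) = 0 by ring, Real.rpow_zero, mul_one]

end MeasureTheory

theorem testing_estimate_Ap_Ainfty_general
    {Ω : Type*} {m : MeasurableSpace Ω} {μ : Measure Ω}
    (ℱ : Filtration ℤ m) [SigmaFiniteFiltration μ ℱ]
    (p : ℝ) (hp : 1 < p)
    (v σ : Ω → ℝ)
    (hv_nonneg : 0 ≤ v) (hσ_nonneg : 0 ≤ σ)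
    (hv_int : Integrable v μ) (hσ_int : Integrable σ μ)
    -- `(v,ω) ∈ A_p` with constant `Ap`
    (Ap : ℝ) (hAp_nonneg : 0 ≤ Ap)
    (hAp : ∀ j : ℤ, ∀ᵐ x ∂μ,
      (μ[v|ℱ j]) x * (μ[σ|ℱ j]) x ^ (p / (p / (p - 1))) ≤ Ap)
    -- `σ ∈ A*_∞` with constant `Ainf`
    (Ainf : ℝ)
    (hAinf : ∀ i : ℤ, ∀ E : Set Ω, MeasurableSet[ℱ i] E → μ E < ∞ →
      ∫⁻ x in E, (⨆ j : {j : ℤ // i ≤ j},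
          ENNReal.ofReal |(μ[E.indicator σ|ℱ j.1]) x|) ∂μ
        ≤ ENNReal.ofReal Ainf * ∫⁻ x in E, ENNReal.ofReal (σ x) ∂μ) :
    ∃ C' : ℝ, 0 < C' ∧
      ∀ i : ℤ, ∀ E : Set Ω, MeasurableSet[ℱ i] E → μ E < ∞ →
        ∫⁻ x in E, (⨆ j : {j : ℤ // i ≤ j},
            ENNReal.ofReal |(μ[E.indicator σ|ℱ j.1]) x|) ^ p
            * ENNReal.ofReal (v x) ∂μ
          ≤ ENNReal.ofReal (C' * Ap * Ainf) * ∫⁻ x in E, ENNReal.ofReal (σ x) ∂μ := by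
  refine ⟨p, by linarith, fun i E hE hE_fin => ?_⟩
  have hEm : MeasurableSet E := ℱ.le i E hE
  set g : ℤ → Ω → ℝ := fun j => μ[E.indicator σ|ℱ j]
  have hg : Adapted ℱ g := fun j => stronglyMeasurable_condExp.measurable
  have hM : Measurable (tailMaximal g i) :=
    measurable_tailMaximal fun j => (hg j).mono (ℱ.le j) le_rfl
  have hgσ : ∀ j, ∀ᵐ x ∂μ, |g j x| ≤ μ[σ|ℱ j] x := fun j =>
    (abs_condExp_ae_le_condExp_abs _).trans <|
      condExp_mono (hσ_int.indicator hEm).abs hσ_int <| ae_of_all _ fun x => by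
        rw [Pi.abs_apply, abs_of_nonneg (indicator_nonneg (fun y _ => hσ_nonneg y) x)]
        exact indicator_le_self' (fun y _ => hσ_nonneg y) x
  have hAp' : ∀ j, ∀ᵐ x ∂μ, μ[v|ℱ j] x * μ[σ|ℱ j] x ^ (p - 1) ≤ Ap := by
    have hexp : p / (p / (p - 1)) = p - 1 := by field_simp
    simpa only [hexp] using hAp
  have hAinfE : ∫⁻ x in E, tailMaximal g i x ∂μ
      ≤ ENNReal.ofReal Ainf * ∫⁻ x in E, ENNReal.ofReal (σ x) ∂μ := hAinf i E hE hE_fin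
  have hM_fin : ∀ᵐ x ∂μ.restrict E, tailMaximal g i x ≠ ∞ :=
    (ae_lt_top hM (ne_top_of_le_ne_top (ENNReal.mul_ne_top ENNReal.ofReal_ne_top
      hσ_int.integrableOn.setLIntegral_lt_top.ne) hAinfE)).mono fun x hx => hx.ne
  calc ∫⁻ x in E, tailMaximal g i x ^ p * ENNReal.ofReal (v x) ∂μ
      = ∫⁻ x in E, tailMaximal g i x ^ p ∂μ.withDensity fun x => ENNReal.ofReal (v x) := by
        rw [setLIntegral_withDensity_eq_lintegral_mul₀ hv_int.aemeasurable.ennreal_ofReal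
          (hM.pow_const p).aemeasurable hEm]
        simp only [Pi.mul_apply, mul_comm]
    _ ≤ ENNReal.ofReal p * ENNReal.ofReal Ap * ∫⁻ x in E, tailMaximal g i x ∂μ :=
        lintegral_rpow_le_of_meas_lt_mul_rpow_le
          ((withDensity_absolutelyContinuous _ _).restrict E) hM hM_fin (by linarith)
          fun t ht => withDensity_restrict_setOf_lt_tailMaximal_mul_rpow_le hg hv_int
            (ae_of_all _ hv_nonneg) hp.le hAp' hgσ hE ht
    _ ≤ ENNReal.ofReal p * ENNReal.ofReal Ap
          * (ENNReal.ofReal Ainf * ∫⁻ x in E, ENNReal.ofReal (σ x) ∂μ) := by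
        gcongr
    _ = ENNReal.ofReal (p * Ap * Ainf) * ∫⁻ x in E, ENNReal.ofReal (σ x) ∂μ := by
        rw [ENNReal.ofReal_mul (by positivity), ENNReal.ofReal_mul (by linarith)]
        ring

/-- **Testing estimate under `A_p` and `A*_∞`** (proof of Theorem 1.6 (2)):
if `(v,ω) ∈ A_p` and `σ = ω^{1-p'} ∈ A*_∞`, then for every `i ∈ ℤ` and `E ∈ 𝓕ᵢ⁰`,
`∫_E (*Mᵢ(σχ_E))^p v dμ ≤ C' [v,ω]_{A_p} [σ]_{A*_∞} σ(E)` with an absolute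
constant `C'`. -/
theorem testing_estimate_Ap_Ainfty
    {Ω : Type*} {m : MeasurableSpace Ω} {μ : Measure Ω} [SigmaFinite μ]
    (ℱ : Filtration ℤ m) [SigmaFiniteFiltration μ ℱ]
    (p : ℝ) (hp : 1 < p)
    (v ω σ : Ω → ℝ)
    (hv_nonneg : 0 ≤ v) (hω_nonneg : 0 ≤ ω) (hσ_nonneg : 0 ≤ σ)
    (hv_meas : Measurable v) (hω_meas : Measurable ω) (hσ_meas : Measurable σ)
    (hv_int : Integrable v μ) (hσ_int : Integrable σ μ)
    (hσ_def : σ = fun x => ω x ^ (1 - p / (p - 1)))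
    -- `(v,ω) ∈ A_p` with constant `Ap`
    (Ap : ℝ) (hAp_nonneg : 0 ≤ Ap)
    (hAp : ∀ j : ℤ, ∀ᵐ x ∂μ,
      (μ[v|ℱ j]) x * (μ[σ|ℱ j]) x ^ (p / (p / (p - 1))) ≤ Ap)
    -- `σ ∈ A*_∞` with constant `Ainf`
    (Ainf : ℝ) (hAinf_nonneg : 0 ≤ Ainf)
    (hAinf : ∀ i : ℤ, ∀ E : Set Ω, MeasurableSet[ℱ i] E → μ E < ∞ →
      ∫⁻ x in E, (⨆ j : {j : ℤ // i ≤ j},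
          ENNReal.ofReal |(μ[E.indicator σ|ℱ j.1]) x|) ∂μ
        ≤ ENNReal.ofReal Ainf * ∫⁻ x in E, ENNReal.ofReal (σ x) ∂μ) :
    ∃ C' : ℝ, 0 < C' ∧
      ∀ i : ℤ, ∀ E : Set Ω, MeasurableSet[ℱ i] E → μ E < ∞ →
        ∫⁻ x in E, (⨆ j : {j : ℤ // i ≤ j},
            ENNReal.ofReal |(μ[E.indicator σ|ℱ j.1]) x|) ^ p
            * ENNReal.ofReal (v x) ∂μ
          ≤ ENNReal.ofReal (C' * Ap * Ainf) * ∫⁻ x in E, ENNReal.ofReal (σ x) ∂μ :=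
  testing_estimate_Ap_Ainfty_general ℱ p hp v σ hv_nonneg hσ_nonneg hv_int hσ_int Ap hAp_nonneg hAp
    Ainf hAinf
end
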